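/- Let A ⊆ ℝⁿ and consider vectors v_p ∈ ℝⁿ (p in a finite index set P), w_q ∈ ℝⁿ (q in Q₀), and standard basis vectors e_i for i in a set I₀ ⊆ {1,…,n}. Suppose the family {v_p, w_q, e_i : p ∈ P, q ∈ Q₀, i ∈ I₀} is linearly independent in ℝⁿ. Partition I₀ = a₀₁ ∪ a₀₀, let a₁₀ = {1,…,n} \ I₀, and let E ⊆ a₀₁. Then, provided E is a proper subset of a₀₁, the family in ℝ²ⁿ consisting of (v_p, 0), (w_q, 0), (e_i, 0) for i ∈ a₀₁ ∪ a₀₀, (0, e_i) for i ∈ E ∪ a₁₀ ∪ a₀₀, together with (0, 𝟙) (where 𝟙 is the all-ones vector) is linearly independent. -/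
import Mathlib

/-- Auxiliary: singles on a finset `S` together with the all-ones vector are
linearly independent provided some index `j` avoids `S`. -/
lemma aux_snd_li {n : ℕ} (S : Finset (Fin n)) (j : Fin n) (hj : j ∉ S) :
    LinearIndependent ℝ (Sum.elim
      (fun i : {i // i ∈ S} => (Pi.single i.1 1 : Fin n → ℝ))
      (fun _ : Unit => (fun _ => 1 : Fin n → ℝ))) := by
  rw [Fintype.linearIndependent_iff]
  intro g hg
  have hg' : ∀ x : Fin n,
      (∑ i : {i // i ∈ S}, g (Sum.inl i) * (Pi.single i.1 1 : Fin n → ℝ) x)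
        + g (Sum.inr ()) = 0 := by
    intro x
    have := congrFun hg x
    simpa [Fintype.sum_sum_type, Finset.sum_apply, Pi.smul_apply, smul_eq_mul]
      using this
  have hc : g (Sum.inr ()) = 0 := by
    have := hg' j
    have hz : (∑ i : {i // i ∈ S}, g (Sum.inl i) * (Pi.single i.1 1 : Fin n → ℝ) j) = 0 := by
      apply Finset.sum_eq_zero
      intro i _
      have : i.1 ≠ j := fun h => hj (h ▸ i.2)
      simp [Pi.single_apply, this]
    rw [hz, zero_add] at this
    exact this
  have hi : ∀ i : {i // i ∈ S}, g (Sum.inl i) = 0 := by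
    intro i
    have := hg' i.1
    rw [hc, add_zero] at this
    rw [Finset.sum_eq_single i] at this
    · simpa using this
    · intro k _ hk
      have : k.1 ≠ i.1 := fun h => hk (Subtype.ext h)
      simp [Pi.single_apply, this]
    · intro h; exact absurd (Finset.mem_univ i) h
  intro x
  cases x with
  | inl i => exact hi i
  | inr u => cases u; exact hc

theorem stmt_8 (n : ℕ) (P Q : Type*) [Finite P] [Finite Q]
    (v : P → (Fin n → ℝ)) (w : Q → (Fin n → ℝ))
    (a01 a00 : Finset (Fin n)) (hdisj : Disjoint a01 a00)
    (a10 : Finset (Fin n)) (ha10 : a10 = (a01 ∪ a00)ᶜ)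
    (E : Finset (Fin n)) (hE : E ⊂ a01)
    (hli : LinearIndependent ℝ (Sum.elim (Sum.elim v w)
      (fun i : {i // i ∈ a01 ∪ a00} => (Pi.single i.1 1 : Fin n → ℝ)))) :
    LinearIndependent ℝ
      (Sum.elim
        (Sum.elim
          (Sum.elim (fun p => ((v p, 0) : (Fin n → ℝ) × (Fin n → ℝ)))
                    (fun q => ((w q, 0) : (Fin n → ℝ) × (Fin n → ℝ))))
          (fun i : {i // i ∈ a01 ∪ a00} =>
            ((Pi.single i.1 1, 0) : (Fin n → ℝ) × (Fin n → ℝ))))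
        (Sum.elim
          (fun i : {i // i ∈ E ∪ a10 ∪ a00} =>
            ((0, Pi.single i.1 1) : (Fin n → ℝ) × (Fin n → ℝ)))
          (fun _ : Unit => ((0, fun _ => 1) : (Fin n → ℝ) × (Fin n → ℝ))))) := by
  -- pick j ∈ a01 \ E
  obtain ⟨j, hja, hjE⟩ := Finset.exists_of_ssubset hE
  have hjS : j ∉ E ∪ a10 ∪ a00 := by
    simp only [Finset.mem_union, not_or, ha10, Finset.mem_compl]
    refine ⟨⟨hjE, ?_⟩, ?_⟩
    · simp [Finset.mem_union, hja]
    · exact fun h => (Finset.disjoint_left.mp hdisj hja) h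
  set f₁ : (P ⊕ Q) ⊕ {i // i ∈ a01 ∪ a00} → (Fin n → ℝ) :=
    Sum.elim (Sum.elim v w)
      (fun i : {i // i ∈ a01 ∪ a00} => (Pi.single i.1 1 : Fin n → ℝ)) with hf₁
  set f₂ : {i // i ∈ E ∪ a10 ∪ a00} ⊕ Unit → (Fin n → ℝ) :=
    Sum.elim (fun i : {i // i ∈ E ∪ a10 ∪ a00} => (Pi.single i.1 1 : Fin n → ℝ))
      (fun _ : Unit => (fun _ => 1 : Fin n → ℝ)) with hf₂
  have h₂ : LinearIndependent ℝ f₂ := aux_snd_li _ j hjS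
  have key := linearIndependent_inl_union_inr' hli h₂
  convert key using 1
  funext x
  rcases x with ((x | x) | x) | (x | x) <;>
    simp [hf₁, hf₂, Function.comp, LinearMap.inl_apply, LinearMap.inr_apply]
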